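/- Let t ∈ (0, 1/4) and evaluate the mixed derivative of u_t at the point p_t = (e^{−1/(4t)}, 0, ..., 0). Since η ≡ 1 near p_t, one has ∂²u_t/∂x₁∂x₂(p_t) = e^{−1/2} φ(1/(2t)) + 2t (e^{−1/(4t)})^{2t} φ(1/(2t)) − 2 e^{−1/2} φ'(1/(2t)). In particular as t → 0⁺ the second and third terms stay bounded (the second by B₁, the third tends to 0), while the first term tends to +∞. -/

import Mathlib

open Real Filter Metric Set Classical

lemma auxPhiDiff (φ : ℝ → ℝ) (hφsmooth : ContDiffOn ℝ 2 φ (Set.Ioi 0)) {a : ℝ} (ha : 0 < a) :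
    HasDerivAt φ (deriv φ a) a := by
  have := ((hφsmooth.differentiableOn (by norm_num)).differentiableAt
    (Ioi_mem_nhds ha))
  exact this.hasDerivAt

lemma auxPhi'Diff (φ : ℝ → ℝ) (hφsmooth : ContDiffOn ℝ 2 φ (Set.Ioi 0)) {a : ℝ} (ha : 0 < a) :
    DifferentiableAt ℝ (deriv φ) a := by
  have h1 : ContDiffOn ℝ 1 (deriv φ) (Set.Ioi 0) :=
    hφsmooth.deriv_of_isOpen isOpen_Ioi (by norm_num)
  exact (h1.differentiableOn (by norm_num)).differentiableAt (Ioi_mem_nhds ha)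

lemma auxH (φ : ℝ → ℝ) (hφsmooth : ContDiffOn ℝ 2 φ (Set.Ioi 0)) (t : ℝ) {s : ℝ}
    (hs0 : 0 < s) (hs1 : s < 1) :
    HasDerivAt (fun s : ℝ => s ^ t * φ (-Real.log s))
      (s ^ (t-1) * (t * φ (-Real.log s) - deriv φ (-Real.log s))) s := by
  have hlog : 0 < -Real.log s := by
    have := Real.log_neg hs0 hs1; linarith
  have hφd : HasDerivAt φ (deriv φ (-Real.log s)) (-Real.log s) := auxPhiDiff φ hφsmooth hlog
  have hl : HasDerivAt (fun s : ℝ => -Real.log s) (-s⁻¹) s := (Real.hasDerivAt_log hs0.ne').neg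
  have h2 : HasDerivAt (fun s : ℝ => φ (-Real.log s)) (deriv φ (-Real.log s) * -s⁻¹) s :=
    hφd.comp s hl
  have h3 : HasDerivAt (fun s : ℝ => s ^ t) (t * s ^ (t-1)) s :=
    Real.hasDerivAt_rpow_const (Or.inl hs0.ne')
  have := h3.mul h2
  refine this.congr_deriv ?_
  rw [Real.rpow_sub hs0, Real.rpow_one]
  field_simp
  ring

lemma auxH1 (φ : ℝ → ℝ) (hφsmooth : ContDiffOn ℝ 2 φ (Set.Ioi 0)) (t : ℝ) {s : ℝ}
    (hs0 : 0 < s) (hs1 : s < 1) :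
    DifferentiableAt ℝ (fun s : ℝ => s ^ (t-1) * (t * φ (-Real.log s) - deriv φ (-Real.log s))) s := by
  have hlog : 0 < -Real.log s := by
    have := Real.log_neg hs0 hs1; linarith
  have hl : HasDerivAt (fun s : ℝ => -Real.log s) (-s⁻¹) s := (Real.hasDerivAt_log hs0.ne').neg
  have h2 : DifferentiableAt ℝ (fun s : ℝ => φ (-Real.log s)) s :=
    ((auxPhiDiff φ hφsmooth hlog).comp s hl).differentiableAt
  have h2' : DifferentiableAt ℝ (fun s : ℝ => deriv φ (-Real.log s)) s :=
    by have := (auxPhi'Diff φ hφsmooth hlog).comp s hl.differentiableAt; exact this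
  have h3 : DifferentiableAt ℝ (fun s : ℝ => s ^ (t-1)) s :=
    (Real.hasDerivAt_rpow_const (Or.inl hs0.ne')).differentiableAt
  exact h3.mul ((h2.const_mul t).sub h2')

lemma auxMain (n : ℕ) (φ : ℝ → ℝ) (hφsmooth : ContDiffOn ℝ 2 φ (Set.Ioi 0)) (t : ℝ)
    (i0 i1 : Fin n) (hne : i1 ≠ i0)
    (v : EuclideanSpace ℝ (Fin n) → ℝ)
    (hv : ∀ y : EuclideanSpace ℝ (Fin n), 0 < ‖y‖ → ‖y‖ < 1/2 →
      v y = y i0 * y i1 * ((‖y‖^2:ℝ) ^ t * φ (-Real.log (‖y‖^2))))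
    (r : ℝ) (hr0 : 0 < r) (hr : r < 1/2) :
    fderiv ℝ (fun y => fderiv ℝ v y (EuclideanSpace.single i0 1))
      (EuclideanSpace.single i0 r) (EuclideanSpace.single i1 1)
    = (r^2:ℝ)^t * φ (-Real.log (r^2))
      + 2*r^2 * ((r^2:ℝ)^(t-1) * (t * φ (-Real.log (r^2)) - deriv φ (-Real.log (r^2)))) := by
  set h : ℝ → ℝ := fun s => s ^ t * φ (-Real.log s) with hh_def
  set h1 : ℝ → ℝ := fun s => s ^ (t-1) * (t * φ (-Real.log s) - deriv φ (-Real.log s)) with hh1_def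
  set U : Set (EuclideanSpace ℝ (Fin n)) := (fun y : EuclideanSpace ℝ (Fin n) => ‖y‖) ⁻¹' (Set.Ioo 0 (1/2)) with hU_def
  have hUopen : IsOpen U := IsOpen.preimage continuous_norm isOpen_Ioo
  set p : EuclideanSpace ℝ (Fin n) := EuclideanSpace.single i0 r with hp_def
  have hnormp : ‖p‖ = r := by
    rw [hp_def, EuclideanSpace.norm_single, Real.norm_eq_abs, abs_of_pos hr0]
  have hpU : p ∈ U := by
    show ‖p‖ ∈ Set.Ioo 0 (1/2)
    rw [hnormp]; exact ⟨hr0, hr⟩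
  -- derivative data at any y ∈ U
  have hDer : ∀ y ∈ U, HasFDerivAt v
      ((y i0 * y i1) • (h1 (‖y‖^2) • (2 • innerSL ℝ y))
        + h (‖y‖^2) • ((y i0) • (EuclideanSpace.proj i1 : EuclideanSpace ℝ (Fin n) →L[ℝ] ℝ)
            + (y i1) • (EuclideanSpace.proj i0 : EuclideanSpace ℝ (Fin n) →L[ℝ] ℝ))) y := by
    intro y hy
    obtain ⟨hy0, hy2⟩ := hy
    have hq0 : (0:ℝ) < ‖y‖^2 := by positivity
    have hq1 : ‖y‖^2 < 1 := by nlinarith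
    have hQ : HasFDerivAt (fun y : EuclideanSpace ℝ (Fin n) => ‖y‖^2) (2 • innerSL ℝ y) y :=
      (hasStrictFDerivAt_norm_sq y).hasFDerivAt
    have hh : HasDerivAt h (h1 (‖y‖^2)) (‖y‖^2) := auxH φ hφsmooth t hq0 hq1
    have hcomp : HasFDerivAt (fun y : EuclideanSpace ℝ (Fin n) => h (‖y‖^2)) (h1 (‖y‖^2) • (2 • innerSL ℝ y)) y :=
      by have := hh.comp_hasFDerivAt y hQ; exact this
    have hx0 : HasFDerivAt (fun y : EuclideanSpace ℝ (Fin n) => y i0) (EuclideanSpace.proj i0 : EuclideanSpace ℝ (Fin n) →L[ℝ] ℝ) y :=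
      (EuclideanSpace.proj i0 : EuclideanSpace ℝ (Fin n) →L[ℝ] ℝ).hasFDerivAt
    have hx1 : HasFDerivAt (fun y : EuclideanSpace ℝ (Fin n) => y i1) (EuclideanSpace.proj i1 : EuclideanSpace ℝ (Fin n) →L[ℝ] ℝ) y :=
      (EuclideanSpace.proj i1 : EuclideanSpace ℝ (Fin n) →L[ℝ] ℝ).hasFDerivAt
    have hF : HasFDerivAt (fun y : EuclideanSpace ℝ (Fin n) => y i0 * y i1 * h (‖y‖^2))
        ((y i0 * y i1) • (h1 (‖y‖^2) • (2 • innerSL ℝ y))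
          + h (‖y‖^2) • ((y i0) • (EuclideanSpace.proj i1 : EuclideanSpace ℝ (Fin n) →L[ℝ] ℝ)
              + (y i1) • (EuclideanSpace.proj i0 : EuclideanSpace ℝ (Fin n) →L[ℝ] ℝ))) y :=
      (hx0.mul hx1).mul hcomp
    apply hF.congr_of_eventuallyEq
    filter_upwards [hUopen.mem_nhds ⟨hy0, hy2⟩] with z hz
    exact hv z hz.1 hz.2
  -- the first directional derivative equals g on U
  set g : EuclideanSpace ℝ (Fin n) → ℝ := fun y => y i1 * h (‖y‖^2) + (2 * (y i0 * y i1)) * h1 (‖y‖^2) * y i0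
    with hg_def
  have hproj : ∀ (i j : Fin n) (a : ℝ),
      (EuclideanSpace.proj i : EuclideanSpace ℝ (Fin n) →L[ℝ] ℝ) (EuclideanSpace.single j a)
        = if i = j then a else 0 := by
    intro i j a
    show (EuclideanSpace.single j a) i = _
    simp [EuclideanSpace.single_apply]
  have hin : ∀ (y : EuclideanSpace ℝ (Fin n)) (i : Fin n),
      (inner ℝ y (EuclideanSpace.single i (1:ℝ)) : ℝ) = y i := by
    intro y i
    simp [EuclideanSpace.inner_single_right]
  have heq : ∀ y ∈ U, fderiv ℝ v y (EuclideanSpace.single i0 1) = g y := by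
    intro y hy
    rw [(hDer y hy).fderiv]
    simp [hg_def, hin, hproj, hne]
    ring
  have hev : (fun y => fderiv ℝ v y (EuclideanSpace.single i0 1)) =ᶠ[nhds p] g := by
    filter_upwards [hUopen.mem_nhds hpU] with z hz
    exact heq z hz
  rw [hev.fderiv_eq]
  -- second derivative
  have hq0 : (0:ℝ) < ‖p‖^2 := by rw [hnormp]; positivity
  have hq1 : ‖p‖^2 < 1 := by rw [hnormp]; nlinarith
  have hQ : HasFDerivAt (fun y : EuclideanSpace ℝ (Fin n) => ‖y‖^2) (2 • innerSL ℝ p) p :=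
    (hasStrictFDerivAt_norm_sq p).hasFDerivAt
  have hcomp1 : HasFDerivAt (fun y : EuclideanSpace ℝ (Fin n) => h (‖y‖^2)) (h1 (‖p‖^2) • (2 • innerSL ℝ p)) p :=
    by have := (auxH φ hφsmooth t hq0 hq1).comp_hasFDerivAt p hQ; exact this
  have hcomp2 : HasFDerivAt (fun y : EuclideanSpace ℝ (Fin n) => h1 (‖y‖^2)) (deriv h1 (‖p‖^2) • (2 • innerSL ℝ p)) p :=
    by have := ((auxH1 φ hφsmooth t hq0 hq1).hasDerivAt).comp_hasFDerivAt p hQ; exact this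
  have hx0 : HasFDerivAt (fun y : EuclideanSpace ℝ (Fin n) => y i0) (EuclideanSpace.proj i0 : EuclideanSpace ℝ (Fin n) →L[ℝ] ℝ) p :=
    (EuclideanSpace.proj i0 : EuclideanSpace ℝ (Fin n) →L[ℝ] ℝ).hasFDerivAt
  have hx1 : HasFDerivAt (fun y : EuclideanSpace ℝ (Fin n) => y i1) (EuclideanSpace.proj i1 : EuclideanSpace ℝ (Fin n) →L[ℝ] ℝ) p :=
    (EuclideanSpace.proj i1 : EuclideanSpace ℝ (Fin n) →L[ℝ] ℝ).hasFDerivAt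
  have hg : HasFDerivAt g
      (((p i1) • (h1 (‖p‖^2) • (2 • innerSL ℝ p)) + h (‖p‖^2) • (EuclideanSpace.proj i1 : EuclideanSpace ℝ (Fin n) →L[ℝ] ℝ))
        + (((2 * (p i0 * p i1)) * h1 (‖p‖^2)) • (EuclideanSpace.proj i0 : EuclideanSpace ℝ (Fin n) →L[ℝ] ℝ)
            + (p i0) • ((2 * (p i0 * p i1)) • (deriv h1 (‖p‖^2) • (2 • innerSL ℝ p))
                + h1 (‖p‖^2) • ((2:ℝ) • ((p i0) • (EuclideanSpace.proj i1 : EuclideanSpace ℝ (Fin n) →L[ℝ] ℝ)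
                    + (p i1) • (EuclideanSpace.proj i0 : EuclideanSpace ℝ (Fin n) →L[ℝ] ℝ)))))) p :=
    (hx1.mul hcomp1).add ((((hx0.mul hx1).const_mul 2).mul hcomp2).mul hx0)
  rw [hg.fderiv]
  have hpz : p i1 = 0 := by simp [hp_def, EuclideanSpace.single_apply, hne]
  have hpr : p i0 = r := by simp [hp_def, EuclideanSpace.single_apply]
  simp [hpz, hpr, hnormp, hin, hproj, hne, hh_def, hh1_def]
  ring

lemma auxInvTendsto : Tendsto (fun t : ℝ => 1/(2*t)) (nhdsWithin (0:ℝ) (Set.Ioi 0)) atTop := by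
  have h2t : Tendsto (fun t : ℝ => 2*t) (nhdsWithin (0:ℝ) (Set.Ioi 0))
      (nhdsWithin (0:ℝ) (Set.Ioi 0)) := by
    apply tendsto_nhdsWithin_of_tendsto_nhds_of_eventually_within
    · have h : Tendsto (fun t : ℝ => 2*t) (nhds (0:ℝ)) (nhds (2*0)) :=
        Continuous.tendsto (continuous_mul_left 2) 0
      rw [mul_zero] at h
      exact h.mono_left nhdsWithin_le_nhds
    · filter_upwards [self_mem_nhdsWithin] with x hx
      exact Set.mem_Ioi.mpr (mul_pos two_pos (Set.mem_Ioi.mp hx))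
  have h := tendsto_inv_nhdsGT_zero.comp h2t
  have heq : (fun t : ℝ => 1/(2*t)) = (fun x : ℝ => x⁻¹) ∘ (fun t : ℝ => 2*t) := by
    funext x
    rw [Function.comp_apply, one_div]
  rw [heq]
  exact h

/-- Evaluation of the mixed second derivative of u_t at p_t = (e^{−1/(4t)}, 0, …, 0):
the exact formula, the uniform bound on the middle term, the vanishing of the
φ'-term, and the blow-up of the main term as t → 0⁺. -/
theorem stmt13 (n : ℕ) (hn : 2 ≤ n) (φ η : ℝ → ℝ)
    (hφsmooth : ContDiffOn ℝ 2 φ (Set.Ioi 0))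
    (hφ : Tendsto φ atTop atTop)
    (hφ' : Tendsto (deriv φ) atTop (nhds 0))
    (hφ'' : Tendsto (deriv (deriv φ)) atTop (nhds 0))
    (hηsmooth : ContDiff ℝ (⊤ : ℕ∞) η)
    (hηmono : AntitoneOn η (Set.Ici 0))
    (hηrange : ∀ s : ℝ, 0 ≤ s → η s ∈ Set.Icc (0:ℝ) 1)
    (hη1 : ∀ s : ℝ, 0 ≤ s → s ≤ 1/2 → η s = 1)
    (hη0 : ∀ s : ℝ, 2/3 ≤ s → η s = 0)
    (u : ℝ → EuclideanSpace ℝ (Fin n) → ℝ)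
    (hu : ∀ t : ℝ, ∀ x : EuclideanSpace ℝ (Fin n),
      u t x = if x = 0 ∨ 1 ≤ ‖x‖ then 0
        else η ‖x‖ * x ⟨0, by omega⟩ * x ⟨1, by omega⟩ * ‖x‖ ^ (2 * t)
              * φ (-Real.log (‖x‖ ^ (2:ℕ)))) :
    (∀ t : ℝ, t ∈ Set.Ioo (0:ℝ) (1/4) →
      fderiv ℝ (fun y => fderiv ℝ (u t) y
          (EuclideanSpace.single (⟨0, by omega⟩ : Fin n) 1))
        (EuclideanSpace.single (⟨0, by omega⟩ : Fin n) (Real.exp (-(1/(4*t)))))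
        (EuclideanSpace.single (⟨1, by omega⟩ : Fin n) 1)
      = Real.exp (-(1/2)) * φ (1/(2*t))
        + 2 * t * (Real.exp (-(1/(4*t)))) ^ (2*t) * φ (1/(2*t))
        - 2 * Real.exp (-(1/2)) * deriv φ (1/(2*t))) ∧
    (∃ B : ℝ, ∀ t : ℝ, t ∈ Set.Ioo (0:ℝ) (1/4) →
      |2 * t * (Real.exp (-(1/(4*t)))) ^ (2*t) * φ (1/(2*t))| ≤ B) ∧
    Tendsto (fun t : ℝ => 2 * Real.exp (-(1/2)) * deriv φ (1/(2*t)))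
      (nhdsWithin 0 (Set.Ioi 0)) (nhds 0) ∧
    Tendsto (fun t : ℝ => Real.exp (-(1/2)) * φ (1/(2*t)))
      (nhdsWithin 0 (Set.Ioi 0)) atTop := by
  have hrp : ∀ a b : ℝ, Real.exp a ^ b = Real.exp (a * b) := by
    intro a b
    rw [Real.rpow_def_of_pos (Real.exp_pos a), Real.log_exp]
  have hexp12 : ∀ t : ℝ, t ∈ Set.Ioo (0:ℝ) (1/4) →
      (Real.exp (-(1/(4*t)))) ^ (2*t) = Real.exp (-(1/2)) := by
    intro t ht
    have htne : t ≠ 0 := ht.1.ne'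
    rw [hrp]
    have : -(1/(4*t)) * (2*t) = -(1/2) := by field_simp; ring
    rw [this]
  refine ⟨?_, ?_, ?_, ?_⟩
  · -- main formula
    intro t ht
    obtain ⟨ht0, ht4⟩ := ht
    have htne : t ≠ 0 := ht0.ne'
    set i0 : Fin n := ⟨0, by omega⟩ with hi0
    set i1 : Fin n := ⟨1, by omega⟩ with hi1
    have hne : i1 ≠ i0 := by
      simp [hi0, hi1, Fin.ext_iff]
    set r : ℝ := Real.exp (-(1/(4*t))) with hr_def
    have hr0 : 0 < r := Real.exp_pos _
    have hr : r < 1/2 := by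
      have h1 : (1:ℝ) ≤ 1/(4*t) := by
        rw [le_div_iff₀ (by linarith)]; linarith
      have h2 : r ≤ Real.exp (-1) := Real.exp_le_exp.2 (by linarith)
      have h3 : Real.exp (-1) < 1/2 := by
        rw [Real.exp_neg]
        rw [inv_lt_comm₀ (Real.exp_pos 1) (by norm_num)]
        have := Real.exp_one_gt_d9
        norm_num at this ⊢
        linarith
      linarith
    have hv : ∀ y : EuclideanSpace ℝ (Fin n), 0 < ‖y‖ → ‖y‖ < 1/2 →
        u t y = y i0 * y i1 * ((‖y‖^2:ℝ) ^ t * φ (-Real.log (‖y‖^2))) := by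
      intro y hy0 hy2
      rw [hu t y]
      have hne0 : y ≠ 0 := by
        intro h; rw [h] at hy0; simp at hy0
      rw [if_neg (by push_neg; exact ⟨hne0, by linarith⟩)]
      rw [hη1 ‖y‖ (norm_nonneg y) hy2.le]
      have hpow : (‖y‖:ℝ) ^ (2*t) = ((‖y‖:ℝ)^(2:ℕ)) ^ t := by
        rw [← Real.rpow_natCast ‖y‖ 2, ← Real.rpow_mul (norm_nonneg y)]
        norm_num
      rw [hpow]
      push_cast
      ring
    have H := auxMain n φ hφsmooth t i0 i1 hne (u t) hv r hr0 hr
    refine H.trans ?_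
    rw [hexp12 t ⟨ht0, ht4⟩]
    have h2 : r^2 = Real.exp (-(1/(2*t))) := by
      rw [sq, hr_def, ← Real.exp_add]
      congr 1
      field_simp
      ring
    have hlog : -Real.log (r^2) = 1/(2*t) := by
      rw [h2, Real.log_exp]; ring
    rw [hlog, h2, hrp, hrp]
    have e1 : -(1/(2*t)) * t = -(1/2) := by field_simp
    rw [e1]
    have e3 : Real.exp (-(1/(2*t))) * Real.exp (-(1/(2*t)) * (t-1)) = Real.exp (-(1/2)) := by
      rw [← Real.exp_add]
      congr 1
      field_simp
      ring
    linear_combination (2 * (t * φ (1/(2*t)) - deriv φ (1/(2*t)))) * e3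
  · -- uniform bound
    have hb : ∀ᶠ s in atTop, deriv φ s ∈ Set.Icc (-1:ℝ) 1 :=
      hφ' (Icc_mem_nhds (by norm_num) (by norm_num))
    obtain ⟨s₀, hs₀⟩ := eventually_atTop.mp hb
    set s₁ : ℝ := max s₀ 2 with hs₁_def
    have hs₁2 : (2:ℝ) ≤ s₁ := le_max_right _ _
    have hcont : ContinuousOn φ (Set.Icc 2 s₁) :=
      hφsmooth.continuousOn.mono (fun x hx => lt_of_lt_of_le (by norm_num) hx.1)
    obtain ⟨M, hM⟩ := isCompact_Icc.exists_bound_of_continuousOn hcont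
    refine ⟨|φ s₁| + |M| + 1, ?_⟩
    intro t ht
    obtain ⟨ht0, ht4⟩ := ht
    rw [hexp12 t ⟨ht0, ht4⟩]
    set s : ℝ := 1/(2*t) with hs_def
    have hs2 : 2 < s := by
      rw [hs_def, lt_div_iff₀ (by linarith)]
      linarith
    have hts : 2*t*s = 1 := by
      rw [hs_def]; field_simp
    have habs : |2 * t * Real.exp (-(1/2)) * φ s| ≤ 2*t*|φ s| := by
      rw [abs_mul]
      have h1 : |2 * t * Real.exp (-(1/2))| ≤ 2*t := by
        rw [abs_of_pos (by positivity)]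
        have : Real.exp (-(1/2)) ≤ 1 := by
          rw [Real.exp_le_one_iff]; norm_num
        nlinarith
      have := abs_nonneg (φ s)
      nlinarith
    refine habs.trans ?_
    rcases le_total s s₁ with hcase | hcase
    · have hMs : |φ s| ≤ M := by
        have := hM s ⟨hs2.le, hcase⟩
        rwa [Real.norm_eq_abs] at this
      have h5 : |φ s| ≤ |M| := hMs.trans (le_abs_self M)
      nlinarith [mul_le_mul_of_nonneg_left h5 (by linarith : (0:ℝ) ≤ 2*t),
        mul_nonneg (by linarith : (0:ℝ) ≤ 1 - 2*t) (abs_nonneg M), abs_nonneg (φ s₁)]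
    · have hmvt : ‖φ s - φ s₁‖ ≤ 1 * ‖s - s₁‖ := by
        apply Convex.norm_image_sub_le_of_norm_hasDerivWithin_le
          (f' := deriv φ) ?_ ?_ (convex_Icc s₁ s) ⟨le_refl s₁, hcase⟩ ⟨hcase, le_refl s⟩
        · intro x hx
          have hx0 : 0 < x := lt_of_lt_of_le (by linarith [hx.1]) (le_refl x)
          exact (auxPhiDiff φ hφsmooth (by linarith [hx.1])).hasDerivWithinAt
        · intro x hx
          rw [Real.norm_eq_abs]
          have hxs : s₀ ≤ x := le_trans (le_max_left _ _) hx.1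
          have := hs₀ x hxs
          exact abs_le.2 ⟨this.1, this.2⟩
      rw [Real.norm_eq_abs, Real.norm_eq_abs, one_mul] at hmvt
      have hmvt' : |φ s - φ s₁| ≤ s - s₁ := by
        rwa [abs_of_nonneg (sub_nonneg.2 hcase)] at hmvt
      have h1 : |φ s| - |φ s₁| ≤ |φ s - φ s₁| := by
        have := abs_sub_abs_le_abs_sub (φ s) (φ s₁)
        linarith
      have h2 : |φ s| ≤ |φ s₁| + s := by linarith
      have h3 : 2*t ≤ 1/2 := by linarith
      have h4 : (0:ℝ) ≤ |M| := abs_nonneg _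
      nlinarith [mul_le_mul_of_nonneg_left h2 (by linarith : (0:ℝ) ≤ 2*t),
        mul_nonneg (by linarith : (0:ℝ) ≤ 1 - 2*t) (abs_nonneg (φ s₁)), hts]
  · -- φ' term vanishes
    have hst := auxInvTendsto
    have := (hφ'.comp hst).const_mul (2 * Real.exp (-(1/2)))
    simpa [Function.comp] using this
  · have hst := auxInvTendsto
    have := (hφ.comp hst).const_mul_atTop (Real.exp_pos (-(1/2)))
    simpa [Function.comp] using this
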